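/- arXiv:2102.01056 — 3 statements merged into one kernel-verified Lean document; each statement's English description precedes it below -/
import Mathlib

section
/- The Fuss-Catalan numbers C_{n,a} = (1/(an+1)) * binom(an+1, n) satisfy the Lagrange-type identity: if y(q) is the formal power series solution of y(y+1)^a = q with y(0)=0 and a ≥ 0 is an integer, then 1/(1+y(q)) = Σ_{n≥0} C_{n,a+1} (-q)^n. -/
/-!
Put `u = (1 + y)⁻¹` and `p = a + 1`. The equation `y (y + 1)^a = X` becomes `u = 1 - X u^p`, so
`u^(r+1) = u^r - X u^(r+p)`. Comparing coefficients, `[X^n] u^r` is determined by this recursion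
together with `u^r(0) = 1`, and the signed Raney numbers `(-1)^n r/(r+pn) binom(r+pn, n)` satisfy
the same recursion by Pascal's rule. For `r = 1` they are the signed Fuss–Catalan numbers.
-/

open PowerSeries

/-- The Fuss–Catalan numbers `C_{n,a} = (1/(an+1)) * choose (an+1) n` as rationals. -/
noncomputable def fussCatalan (n a : ℕ) : ℚ :=
  (1 / (a * n + 1 : ℚ)) * (Nat.choose (a * n + 1) n : ℚ)

-- `raney p 0 0 = 0` (division by zero), whereas `[X^0] u^0 = 1`.
noncomputable def raney (p r n : ℕ) : ℚ :=
  r / (r + p * n : ℕ) * (r + p * n).choose n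

lemma raney_zero_exponent (p n : ℕ) : raney p 0 n = 0 := by
  simp [raney]

lemma raney_apply_zero (p : ℕ) {r : ℕ} (hr : r ≠ 0) : raney p r 0 = 1 := by
  simp [raney, hr]

lemma fussCatalan_eq_raney (n p : ℕ) : fussCatalan n p = raney p 1 n := by
  rw [fussCatalan, raney, add_comm 1]
  push_cast
  ring

lemma raney_succ_succ {p : ℕ} (hp : 0 < p) (r n : ℕ) :
    raney p (r + 1) (n + 1) = raney p r (n + 1) + raney p (r + p) n := by
  obtain ⟨N, hN⟩ : ∃ N, r + p * (n + 1) = N := ⟨_, rfl⟩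
  have hN₁ : r + 1 + p * (n + 1) = N + 1 := by rw [← hN]; ring
  have hN₂ : r + p + p * n = N := by rw [← hN]; ring
  have hNq : (N : ℚ) = r + p * (n + 1) := by rw [← hN]; push_cast; ring
  have hN₀ : (N : ℚ) ≠ 0 := by rw [hNq]; positivity
  have hratio : (N.choose (n + 1) : ℚ) * (n + 1) = N.choose n * (N - n) := by
    have hnN : n ≤ N := by nlinarith
    exact_mod_cast Nat.choose_succ_right_eq N n
  rw [raney, raney, raney, hN, hN₁, hN₂, Nat.choose_succ_succ']
  push_cast
  field_simp
  linear_combination (p : ℚ) * hratio + (N.choose n + N.choose (n + 1) : ℚ) * hNq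

lemma pow_succ_eq_pow_sub_mul_pow {R : Type*} [CommRing R] {u x : R} {p : ℕ}
    (hu : u = 1 - x * u ^ p) (r : ℕ) : u ^ (r + 1) = u ^ r - x * u ^ (r + p) := by
  linear_combination u ^ r * hu

lemma coeff_pow_eq_raney {u : ℚ⟦X⟧} {p : ℕ} (hp : 0 < p) (hu : u = 1 - X * u ^ p)
    (n r : ℕ) (hrn : r + n ≠ 0) : coeff n (u ^ r) = (-1) ^ n * raney p r n := by
  induction n generalizing r with
  | zero =>
    have hu₀ : constantCoeff u = 1 := by rw [hu]; simp
    rw [raney_apply_zero p (by simpa using hrn)]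
    simp [coeff_zero_eq_constantCoeff_apply, hu₀]
  | succ n ih =>
    clear hrn
    induction r with
    | zero => simp [coeff_one, raney_zero_exponent]
    | succ r ihr =>
      rw [pow_succ_eq_pow_sub_mul_pow hu, map_sub, coeff_succ_X_mul, ihr,
        ih (r + p) (by omega), raney_succ_succ hp]
      ring

lemma inv_one_add_eq_one_sub_X_mul_pow {k : Type*} [Field k] {y : k⟦X⟧} {a : ℕ}
    (h0 : constantCoeff y = 0) (hy : y * (y + 1) ^ a = X) :
    (1 + y)⁻¹ = 1 - X * (1 + y)⁻¹ ^ (a + 1) := by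
  set v := (1 + y)⁻¹
  have hv : (1 + y) * v = 1 := PowerSeries.mul_inv_cancel _ (by simp [h0])
  have hXv : X * v ^ (a + 1) = y * v :=
    calc X * v ^ (a + 1) = y * v * ((1 + y) * v) ^ a := by
          rw [← hy, mul_pow, add_comm y 1]; ring
      _ = y * v := by rw [hv, one_pow, mul_one]
  linear_combination hv + hXv

/-- If `y(q)` is the formal power series solution of `y(y+1)^a = q` with `y(0) = 0` and
`a ≥ 0`, then `1/(1+y(q)) = Σ_{n≥0} C_{n,a+1} (-q)^n`. -/
theorem fussCatalan_lagrange_nonneg (a : ℕ) (y : PowerSeries ℚ)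
    (h0 : constantCoeff y = 0) (hy : y * (y + 1) ^ a = X) :
    (1 + y)⁻¹ = PowerSeries.mk fun n => fussCatalan n (a + 1) * (-1) ^ n := by
  ext n
  rw [coeff_mk, fussCatalan_eq_raney, ← pow_one (1 + y)⁻¹,
    coeff_pow_eq_raney a.succ_pos (inv_one_add_eq_one_sub_X_mul_pow h0 hy) n 1 (by omega)]
  ring
end

section
/- Generalized Lagrange inversion over roots: let Q(t) be a formal power series with invertible constant term, N ≥ 1, and let g_1,...,g_N be the N branches of the solution to g^N = x·Q(g) (i.e. g_k(x) = g(ω_N^k x^{1/N}) for a fixed Puiseux solution g). Then for any formal power series φ with φ(0)=0: Σ_{k=1}^N φ(g_k(x)) = Σ_{n>0} (1/n) [t^{nN-1}](φ'(t)Q(t)^n) x^n. -/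
open PowerSeries

/-- Composition of formal power series (substitution of `g`, with `g(0)=0`, into `f`). -/
noncomputable def pcomp {R : Type*} [CommRing R] (f g : PowerSeries R) : PowerSeries R :=
  PowerSeries.mk fun n => ∑ k ∈ Finset.range (n + 1),
    PowerSeries.coeff k f * PowerSeries.coeff n (g ^ k)

/-- `ω_N^k = e^{2πik/N}`, the `N`-th roots of unity. -/
noncomputable def rootOfUnity (N k : ℕ) : ℂ :=
  Complex.exp (2 * Real.pi * Complex.I * k / N)

/-!
Write `g = X·A`, so that `A^N = Q(g)`. Hensel's lemma in `R⟦X⟧` gives `S` with `S^N = Q` and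
`S(0) = A(0)`; two `N`-th roots with the same invertible constant term coincide, so `A = S(g)`,
i.e. `g = X·S(g)`. Classical Lagrange inversion for this equation gives
`m·[x^m] φ(g) = [t^{m-1}] φ'·S^m`, and for `m = nN` we have `S^m = Q^n`. Finally, rescaling by
`ω^k` multiplies the coefficient of `x^{nN}` by `ω^{knN} = 1`, so all `N` branches contribute
the same.

Lagrange inversion is proved by strong induction on `m`: `[x^m] g^j = [x^{m-j}] (S^j)(g)`, the
induction hypothesis at `m - j` turns this into a coefficient of `(S^j)'·S^{m-j}`, and
`m·(S^j)'·S^{m-j} = j·(S^m)'`.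
-/

open Finset

namespace PowerSeries

variable {R : Type*} [CommRing R]

theorem coeff_pow_eq_zero_of_lt {g : R⟦X⟧} (hg : constantCoeff g = 0) {n k : ℕ} (h : n < k) :
    coeff n (g ^ k) = 0 :=
  X_pow_dvd_iff.1 (pow_dvd_pow_of_dvd (X_dvd_iff.2 hg) k) n h

theorem coeff_subst_eq_sum {g : R⟦X⟧} (hg : constantCoeff g = 0) (f : R⟦X⟧) (n : ℕ) :
    coeff n (f.subst g) = ∑ k ∈ range (n + 1), coeff k f * coeff n (g ^ k) := by
  rw [coeff_subst' (HasSubst.of_constantCoeff_zero' hg)]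
  refine finsum_eq_sum_of_support_subset _ fun k hk => ?_
  by_contra hkn
  simp only [coe_range, Set.mem_Iio, not_lt] at hkn
  exact hk (by simp [coeff_pow_eq_zero_of_lt hg (Nat.lt_of_succ_le hkn)])

theorem constantCoeff_subst_of_constantCoeff_eq_zero {g : R⟦X⟧} (hg : constantCoeff g = 0)
    (f : R⟦X⟧) : constantCoeff (f.subst g) = constantCoeff f := by
  simpa using coeff_subst_eq_sum hg f 0

theorem constantCoeff_rescale (a : R) (f : R⟦X⟧) :
    constantCoeff (rescale a f) = constantCoeff f := by
  rw [← coeff_zero_eq_constantCoeff_apply, coeff_rescale, pow_zero, one_mul,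
    coeff_zero_eq_constantCoeff_apply]

theorem subst_rescale {g : R⟦X⟧} (hg : constantCoeff g = 0) (a : R) (f : R⟦X⟧) :
    f.subst (rescale a g) = rescale a (f.subst g) := by
  ext n
  rw [coeff_subst_eq_sum ((constantCoeff_rescale a g).trans hg), coeff_rescale,
    coeff_subst_eq_sum hg, mul_sum]
  refine sum_congr rfl fun k _ => ?_
  rw [← map_pow, coeff_rescale]
  ring

theorem eq_of_pow_eq_pow_of_constantCoeff_eq {A B : R⟦X⟧} {N : ℕ} (h : A ^ N = B ^ N)
    (hc : constantCoeff A = constantCoeff B) (hu : IsUnit ((N : R) * constantCoeff A ^ (N - 1))) :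
    A = B := by
  -- `A^N - B^N = (A - B)·∑ A^i B^{N-1-i}`, and the sum has constant term `N·A(0)^{N-1}`.
  have hunit : IsUnit (∑ i ∈ range N, A ^ i * B ^ (N - 1 - i)) := by
    rw [isUnit_iff_constantCoeff]
    convert hu using 1
    simp only [map_sum, map_mul, map_pow, ← hc, ← pow_add]
    rw [sum_congr rfl fun i hi => by rw [Nat.add_sub_cancel' (by simp at hi; omega)]]
    simp
  rw [← sub_eq_zero, ← hunit.mul_right_eq_zero, geom_sum₂_mul, h, sub_self]

theorem exists_pow_eq_and_constantCoeff_eq {Q : R⟦X⟧} {N : ℕ} (hN : N ≠ 0) {c : R}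
    (hc : c ^ N = constantCoeff Q) (hu : IsUnit ((N : R) * c ^ (N - 1))) :
    ∃ S : R⟦X⟧, S ^ N = Q ∧ constantCoeff S = c := by
  -- `R⟦X⟧` is `(X)`-adically complete, hence Henselian at `(X)`.
  obtain ⟨S, hroot, hlift⟩ :=
    HenselianRing.is_henselian (R := R⟦X⟧) (I := Ideal.span {(X : R⟦X⟧)})
    (Polynomial.X ^ N - Polynomial.C Q) (Polynomial.monic_X_pow_sub_C Q hN) (C c)
    (by simp [Ideal.mem_span_singleton, X_dvd_iff, ← map_pow, hc])
    (by
      convert (hu.map (C (R := R))).map (Ideal.Quotient.mk (Ideal.span {(X : R⟦X⟧)})) using 2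
      simp [Polynomial.derivative_X_pow])
  refine ⟨S, by simpa [sub_eq_zero] using hroot, ?_⟩
  simpa [Ideal.mem_span_singleton, X_dvd_iff, sub_eq_zero] using hlift

theorem exists_pow_eq_and_eq_X_mul_subst {N : ℕ} (hN : N ≠ 0) (hNu : IsUnit (N : R))
    {Q g : R⟦X⟧} (hQ : IsUnit (constantCoeff Q)) (hg0 : constantCoeff g = 0)
    (hg : g ^ N = X ^ N * Q.subst g) :
    ∃ S : R⟦X⟧, S ^ N = Q ∧ g = X * S.subst g := by
  obtain ⟨A, rfl⟩ := X_dvd_iff.2 hg0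
  have hA : A ^ N = Q.subst (X * A) := X_pow_mul_cancel (by rw [← mul_pow, hg])
  have hcN : constantCoeff A ^ N = constantCoeff Q := by
    rw [← map_pow, hA, constantCoeff_subst_of_constantCoeff_eq_zero hg0]
  have hu : IsUnit ((N : R) * constantCoeff A ^ (N - 1)) :=
    hNu.mul (((isUnit_pow_iff hN).1 (hcN ▸ hQ)).pow _)
  obtain ⟨S, hSN, hS0⟩ := exists_pow_eq_and_constantCoeff_eq hN hcN hu
  refine ⟨S, hSN, congrArg (X * ·) (eq_of_pow_eq_pow_of_constantCoeff_eq ?_ ?_ hu)⟩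
  · rw [hA, ← subst_pow (HasSubst.of_constantCoeff_zero' hg0), hSN]
  · rw [constantCoeff_subst_of_constantCoeff_eq_zero hg0, hS0]

theorem coeff_derivative_mul (A B : R⟦X⟧) (v : ℕ) :
    coeff v (d⁄dX R A * B) =
      ∑ i ∈ range (v + 1), (i + 1) * coeff (i + 1) A * coeff (v - i) B := by
  rw [coeff_mul, Nat.sum_antidiagonal_eq_sum_range_succ_mk]
  refine sum_congr rfl fun i _ => ?_
  rw [coeff_derivative]
  ring

theorem coeff_pow_of_eq_X_mul_subst {g S : R⟦X⟧} (hg0 : constantCoeff g = 0)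
    (heq : g = X * S.subst g) {j m : ℕ} (hjm : j ≤ m) :
    coeff m (g ^ j) = coeff (m - j) ((S ^ j).subst g) := by
  conv_lhs => rw [heq]
  rw [mul_pow, ← subst_pow (HasSubst.of_constantCoeff_zero' hg0), coeff_X_pow_mul', if_pos hjm]

theorem natCast_mul_coeff_subst_of_natCast_mul_coeff_pow {g S : R⟦X⟧} {m : ℕ} (hm : 1 ≤ m)
    (hpow : ∀ j, 1 ≤ j → j ≤ m → (m : R) * coeff m (g ^ j) = j * coeff (m - j) (S ^ m))
    (hg0 : constantCoeff g = 0) (f : R⟦X⟧) :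
    (m : R) * coeff m (f.subst g) = coeff (m - 1) (d⁄dX R f * S ^ m) := by
  obtain ⟨v, rfl⟩ := Nat.exists_eq_add_of_le' hm
  rw [coeff_subst_eq_sum hg0, mul_sum, sum_range_succ', Nat.add_sub_cancel, coeff_derivative_mul]
  rw [pow_zero, coeff_one, if_neg (Nat.succ_ne_zero v), mul_zero, mul_zero, add_zero]
  refine sum_congr rfl fun i hi => ?_
  rw [mul_left_comm, hpow (i + 1) (by omega) (by simp at hi; omega), Nat.add_sub_add_right]
  push_cast
  ring

theorem natCast_mul_derivative_pow_mul_pow (S : R⟦X⟧) {j w : ℕ} (hj : 1 ≤ j) :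
    ((j + w : ℕ) : R⟦X⟧) * (d⁄dX R (S ^ j) * S ^ w) = j * d⁄dX R (S ^ (j + w)) := by
  have hpow : S ^ (j - 1) * S ^ w = S ^ (j + w - 1) := by rw [← pow_add]; congr 1; omega
  rw [derivative_pow, derivative_pow]
  linear_combination ((j + w : ℕ) * j * d⁄dX R S : R⟦X⟧) * hpow

theorem natCast_mul_coeff_pow_of_eq_X_mul_subst [IsAddTorsionFree R] {g S : R⟦X⟧}
    (hg0 : constantCoeff g = 0) (heq : g = X * S.subst g) (m : ℕ) :
    ∀ j, 1 ≤ j → j ≤ m → (m : R) * coeff m (g ^ j) = j * coeff (m - j) (S ^ m) := by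
  induction m using Nat.strong_induction_on with
  | _ m ih =>
  intro j hj hjm
  rw [coeff_pow_of_eq_X_mul_subst hg0 heq hjm]
  obtain rfl | hlt := hjm.eq_or_lt
  · rw [Nat.sub_self, coeff_zero_eq_constantCoeff_apply,
      constantCoeff_subst_of_constantCoeff_eq_zero hg0, coeff_zero_eq_constantCoeff_apply]
  obtain ⟨v, rfl⟩ := Nat.exists_eq_add_of_lt hlt
  rw [show j + v + 1 - j = v + 1 by omega]
  have hsub := natCast_mul_coeff_subst_of_natCast_mul_coeff_pow (Nat.le_add_left 1 v)
    (ih (v + 1) (by omega)) hg0 (S ^ j)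
  have hder := congrArg (coeff v) (natCast_mul_derivative_pow_mul_pow S (w := v + 1) hj)
  rw [← add_assoc, ← map_natCast (C (R := R)), ← map_natCast (C (R := R)), coeff_C_mul,
    coeff_C_mul, coeff_derivative] at hder
  rw [← nsmul_right_inj (Nat.succ_ne_zero v), nsmul_eq_mul, nsmul_eq_mul, mul_left_comm, hsub]
  push_cast at hder ⊢
  linear_combination hder

theorem lagrange_inversion [IsAddTorsionFree R] {g S : R⟦X⟧} (hg0 : constantCoeff g = 0)
    (heq : g = X * S.subst g) {m : ℕ} (hm : 1 ≤ m) (f : R⟦X⟧) :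
    (m : R) * coeff m (f.subst g) = coeff (m - 1) (d⁄dX R f * S ^ m) :=
  natCast_mul_coeff_subst_of_natCast_mul_coeff_pow hm
    (natCast_mul_coeff_pow_of_eq_X_mul_subst hg0 heq m) hg0 f

end PowerSeries

theorem rootOfUnity_pow_self {N : ℕ} (hN : N ≠ 0) (k : ℕ) : rootOfUnity N k ^ N = 1 := by
  rw [rootOfUnity, ← Complex.exp_nat_mul,
    show (N : ℂ) * (2 * Real.pi * Complex.I * k / N) = k * (2 * Real.pi * Complex.I) by
      field_simp]
  exact Complex.exp_nat_mul_two_pi_mul_I k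

theorem pcomp_eq_subst {R : Type*} [CommRing R] {g : R⟦X⟧} (hg : constantCoeff g = 0)
    (f : R⟦X⟧) : pcomp f g = f.subst g := by
  ext n
  rw [coeff_subst_eq_sum hg, pcomp, coeff_mk]

theorem generalized_lagrange_inversion_general (N : ℕ) (hN : 1 ≤ N) (Q φ g : PowerSeries ℂ)
    (hQ : IsUnit (constantCoeff Q))
    (hg0 : constantCoeff g = 0)
    (hg : g ^ N = X ^ N * pcomp Q g) :
    ∀ n : ℕ, 0 < n →
      coeff (R := ℂ) (n * N)
          (∑ k ∈ Finset.range N, pcomp φ (PowerSeries.rescale (rootOfUnity N (k + 1)) g)) =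
        (1 / (n : ℂ)) * coeff (R := ℂ) (n * N - 1) (PowerSeries.derivativeFun φ * Q ^ n) := by
  intro n hn
  have hN0 : N ≠ 0 := by omega
  obtain ⟨S, hSN, heq⟩ := exists_pow_eq_and_eq_X_mul_subst hN0 (Nat.cast_ne_zero.2 hN0).isUnit
    hQ hg0 (by rwa [← pcomp_eq_subst hg0])
  have hbranch (k : ℕ) : coeff (n * N) (pcomp φ (rescale (rootOfUnity N (k + 1)) g)) =
      coeff (n * N) (φ.subst g) := by
    rw [pcomp_eq_subst ((constantCoeff_rescale _ g).trans hg0), subst_rescale hg0,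
      coeff_rescale, pow_mul', rootOfUnity_pow_self hN0, one_pow, one_mul]
  have hlag := lagrange_inversion hg0 heq (m := n * N) (Nat.mul_pos hn hN) φ
  rw [pow_mul', hSN] at hlag
  rw [map_sum, sum_congr rfl fun k _ => hbranch k, sum_const, card_range, nsmul_eq_mul]
  change _ = _ * coeff _ (d⁄dX ℂ φ * Q ^ n)
  rw [← hlag, Nat.cast_mul, mul_assoc, one_div, inv_mul_cancel_left₀ (by exact_mod_cast hn.ne')]

/-- Generalized Lagrange inversion over the `N` branches.  Work in the variable `u = x^{1/N}`,
so that `x = u^N`.  Let `g(u)` be a fixed Puiseux solution of `g^N = x·Q(g)`, i.e.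
`g(u)^N = u^N · Q(g(u))` with `g(0) = 0`, and let the branches be `g_k(x) = g(ω_N^k x^{1/N})`.
Then for every power series `φ` with `φ(0) = 0` and every `n > 0`, the coefficient of
`x^n = u^{nN}` in `Σ_{k=1}^N φ(g_k(x))` equals `(1/n)·[t^{nN-1}](φ'(t) Q(t)^n)`. -/
theorem generalized_lagrange_inversion (N : ℕ) (hN : 1 ≤ N) (Q φ g : PowerSeries ℂ)
    (hQ : IsUnit (constantCoeff Q)) (hφ : constantCoeff φ = 0)
    (hg0 : constantCoeff g = 0)
    (hg : g ^ N = X ^ N * pcomp Q g) :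
    ∀ n : ℕ, 0 < n →
      coeff (R := ℂ) (n * N)
          (∑ k ∈ Finset.range N, pcomp φ (PowerSeries.rescale (rootOfUnity N (k + 1)) g)) =
        (1 / (n : ℂ)) * coeff (R := ℂ) (n * N - 1) (PowerSeries.derivativeFun φ * Q ^ n) :=
  generalized_lagrange_inversion_general N hN Q φ g hQ hg0 hg
end

section
/- Limit formula for Chern classes from exterior powers: for a rank-e vector bundle E with Chern roots x_1,...,x_e (working in the Chow/cohomology ring truncated above degree l), lim_{λ→0⁺} (1-e^{-λ})^{l-e} Π_{i=1}^e (e^{(λ-x_i)/2} - e^{-(λ-x_i)/2}) = (-1)^l c_l(E), where the limit is taken coefficient-wise after substituting y^{-1} = e^{-λ}. -/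
/-!
The coefficient of `x^d` in the product factors over the variables: the `i`-th factor contributes
`((-1)^{d_i} e^{λ/2} - e^{-λ/2}) 2^{-d_i} / d_i!`, which vanishes to first order at `λ = 0` when
`d_i` is even and tends to `-2^{1-d_i} / d_i!` when `d_i` is odd. With `k` the number of odd `d_i`,
the expression is therefore `(1 - e^{-λ})^{l-k}` times a function continuous at `0`, and
`k ≤ |d| ≤ l`. So the limit vanishes unless `k = l`, which forces `d_i ∈ {0, 1}` and `|d| = l`,
i.e. `x^d` is a monomial of `e_l`; there the limit is `(-2)^l 2^{-l} = (-1)^l`.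
-/

open Filter

/-- The multivariate power series `e^{c·x_i}` in the variables `x_1,…,x_e`. -/
noncomputable def expXi (e : ℕ) (c : ℝ) (i : Fin e) : MvPowerSeries (Fin e) ℝ :=
  fun d => if d = Finsupp.single i (d i) then c ^ (d i) / ((d i).factorial : ℝ) else 0

open Finset

theorem Finset.sum_single_one_eq_iff {σ : Type*} [DecidableEq σ] {t : Finset σ}
    {d : σ →₀ ℕ} :
    ∑ i ∈ t, Finsupp.single i 1 = d ↔ (∀ i, d i ≤ 1) ∧ d.support = t := by
  have happ (j : σ) : (∑ i ∈ t, Finsupp.single i 1) j = if j ∈ t then 1 else 0 := by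
    simp [Finsupp.finsetSum_apply, Finsupp.single_apply]
  constructor
  · rintro rfl
    refine ⟨fun i => ?_, ?_⟩
    · rw [happ]; split <;> omega
    · ext j; simp [happ]
  · rintro ⟨hd, rfl⟩
    ext j
    have := hd j
    simp only [happ, Finsupp.mem_support_iff]
    split <;> omega

theorem MvPolynomial.coeff_esymm {σ R : Type*} [Fintype σ] [CommSemiring R] (n : ℕ)
    (d : σ →₀ ℕ) :
    coeff d (esymm σ R n) = if (∀ i, d i ≤ 1) ∧ d.degree = n then 1 else 0 := by
  classical
  simp_rw [esymm_eq_sum_monomial, coeff_sum, coeff_monomial, Finset.sum_single_one_eq_iff]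
  by_cases hd : ∀ i, d i ≤ 1
  · have hcard : #d.support = d.degree := by
      rw [Finsupp.degree_apply, card_eq_sum_ones]
      refine sum_congr rfl fun i hi => ?_
      have := hd i; have := Finsupp.mem_support_iff.mp hi; omega
    simp [hd, sum_ite_eq, hcard]
  · simp [hd]

theorem MvPowerSeries.coeff_prod_of_coeff_eq_ite_single {σ R : Type*} [Fintype σ] [DecidableEq σ]
    [CommSemiring R] (f : σ → MvPowerSeries σ R) (g : σ → ℕ → R)
    (hf : ∀ i m, coeff m (f i) = if m = Finsupp.single i (m i) then g i (m i) else 0)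
    (d : σ →₀ ℕ) :
    coeff d (∏ i, f i) = ∏ i, g i (d i) := by
  set diag : σ →₀ σ →₀ ℕ := Finsupp.equivFunOnFinite.symm fun i => Finsupp.single i (d i)
  have hdiag : diag ∈ finsuppAntidiag univ d := by
    rw [mem_finsuppAntidiag]
    refine ⟨Finsupp.ext fun j => ?_, subset_univ _⟩
    simp [diag]
  rw [coeff_prod, sum_eq_single_of_mem diag hdiag]
  · exact prod_congr rfl fun i _ => by simp [diag, hf]
  · intro l hl hne
    by_contra hprod
    have hsingle (i : σ) : l i = Finsupp.single i (l i i) := by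
      by_contra h
      exact hprod (prod_eq_zero (mem_univ i) (by rw [hf, if_neg h]))
    have hdiag_eq (i : σ) : d i = l i i := by
      rw [← (mem_finsuppAntidiag.mp hl).1, Finsupp.finsetSum_apply,
        sum_congr rfl fun j _ => congrArg (· i) (hsingle j)]
      simp [Finsupp.single_apply]
    exact hne (Finsupp.ext fun i => by simp [diag, hdiag_eq, ← hsingle])

theorem coeff_smul_expXi_sub_smul_expXi {e : ℕ} (a b c : ℝ) (i : Fin e) (m : Fin e →₀ ℕ) :
    MvPowerSeries.coeff m (a • expXi e (-c) i - b • expXi e c i) =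
      if m = Finsupp.single i (m i) then ((-1) ^ m i * a - b) * (c ^ m i / (m i).factorial)
      else 0 := by
  simp only [map_sub, MvPowerSeries.coeff_smul]
  change a * ite _ _ _ - b * ite _ _ _ = _
  split_ifs
  · rw [neg_pow]; ring
  · ring

theorem coeff_prod_smul_expXi_sub_smul_expXi {e : ℕ} (a b c : ℝ) (d : Fin e →₀ ℕ) :
    MvPowerSeries.coeff d (∏ i, (a • expXi e (-c) i - b • expXi e c i)) =
      ∏ i, ((-1) ^ d i * a - b) * (c ^ d i / (d i).factorial) :=
  MvPowerSeries.coeff_prod_of_coeff_eq_ite_single _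
    (fun _ n => ((-1) ^ n * a - b) * (c ^ n / n.factorial))
    (coeff_smul_expXi_sub_smul_expXi a b c) d

-- Even exponents contribute a factor `1 - t`, odd ones `-(1 + t)`; the `(1 - t) ^ (n % 2)`
-- on the left keeps the identity free of division.
theorem prod_neg_one_pow_sub_mul {ι R : Type*} [Fintype ι] [CommRing R] (d : ι → ℕ) (t : R) :
    (∏ i, ((-1) ^ d i - t)) * (1 - t) ^ ∑ i, d i % 2 =
      (1 - t) ^ Fintype.card ι * (-(1 + t)) ^ ∑ i, d i % 2 := by
  have factor (n : ℕ) : ((-1) ^ n - t) * (1 - t) ^ (n % 2) = (1 - t) * (-(1 + t)) ^ (n % 2) := by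
    rw [neg_one_pow_eq_pow_mod_two]
    rcases Nat.mod_two_eq_zero_or_one n with h | h <;> rw [h] <;> ring
  rw [← prod_pow_eq_pow_sum, ← prod_pow_eq_pow_sum, ← prod_mul_distrib, ← card_univ,
    ← prod_const, ← prod_mul_distrib]
  exact prod_congr rfl fun i _ => factor (d i)

section limit

open Real

variable {σ : Type*} [Fintype σ]

def oddCount (d : σ →₀ ℕ) : ℕ := ∑ i, d i % 2

theorem oddCount_le_degree (d : σ →₀ ℕ) : oddCount d ≤ d.degree := by
  rw [Finsupp.degree_eq_sum]
  exact sum_le_sum fun i _ => Nat.mod_le _ _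

theorem oddCount_eq_degree_iff (d : σ →₀ ℕ) :
    oddCount d = d.degree ↔ ∀ i, d i ≤ 1 := by
  rw [oddCount, Finsupp.degree_eq_sum, sum_eq_sum_iff_of_le fun i _ => Nat.mod_le _ _]
  exact forall_congr' fun i => by simp only [mem_univ, true_implies]; omega

noncomputable def chernLimitFn (l : ℕ) (d : σ →₀ ℕ) (lam : ℝ) : ℝ :=
  (1 - exp (-lam)) ^ (l - oddCount d) * (-(1 + exp (-lam))) ^ oddCount d *
    exp (lam / 2) ^ Fintype.card σ * ∏ i, (1 / 2 : ℝ) ^ d i / (d i).factorial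

theorem continuous_chernLimitFn (l : ℕ) (d : σ →₀ ℕ) : Continuous (chernLimitFn l d) := by
  unfold chernLimitFn
  fun_prop

theorem chernLimitFn_zero {l : ℕ} {d : σ →₀ ℕ} (hd : d.degree ≤ l) :
    chernLimitFn l d 0 = (-1) ^ l * MvPolynomial.coeff d (MvPolynomial.esymm σ ℝ l) := by
  have hk := oddCount_le_degree d
  simp only [chernLimitFn, neg_zero, exp_zero, sub_self, zero_div, one_pow, mul_one,
    MvPolynomial.coeff_esymm]
  by_cases hkl : oddCount d = l
  · have hdeg : oddCount d = d.degree := by omega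
    have hle : ∀ i, d i ≤ 1 := (oddCount_eq_degree_iff d).mp hdeg
    have hprod : ∏ i, (1 / 2 : ℝ) ^ d i / (d i).factorial = (1 / 2) ^ l := by
      simp_rw [Nat.factorial_eq_one.mpr (hle _), Nat.cast_one, div_one, prod_pow_eq_pow_sum,
        ← Finsupp.degree_eq_sum, ← hdeg, hkl]
    rw [hprod, if_pos ⟨hle, by omega⟩, hkl, Nat.sub_self, pow_zero, one_mul, ← mul_pow]
    norm_num
  · rw [zero_pow (by omega), if_neg fun h => hkl (by rw [(oddCount_eq_degree_iff d).mpr h.1, h.2])]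
    simp

theorem one_sub_exp_zpow_mul_coeff_prod_eq_chernLimitFn {e l : ℕ} {d : Fin e →₀ ℕ} {lam : ℝ}
    (hlam : lam ≠ 0) (hk : oddCount d ≤ l) :
    (1 - exp (-lam)) ^ ((l : ℤ) - e) *
        MvPowerSeries.coeff d (∏ i : Fin e,
          (exp (lam / 2) • expXi e (-(1 / 2)) i - exp (-(lam / 2)) • expXi e (1 / 2) i)) =
      chernLimitFn l d lam := by
  set t := exp (-lam)
  have ht : t ≠ 1 := by simpa [t] using hlam
  have hu : 1 - t ≠ 0 := sub_ne_zero.mpr ht.symm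
  have factor (n : ℕ) : (-1) ^ n * exp (lam / 2) - exp (-(lam / 2)) =
      exp (lam / 2) * ((-1) ^ n - t) := by
    rw [mul_sub, ← exp_add]; ring_nf
  have hprod : ∏ i, ((-1) ^ d i - t) =
      (1 - t) ^ e * (-(1 + t)) ^ oddCount d / (1 - t) ^ oddCount d := by
    refine eq_div_of_mul_eq (pow_ne_zero _ hu) ?_
    have := prod_neg_one_pow_sub_mul (⇑d) t
    rwa [Fintype.card_fin] at this
  have hpow : (1 - t) ^ ((l : ℤ) - e) * (1 - t) ^ e / (1 - t) ^ oddCount d =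
      (1 - t) ^ (l - oddCount d) := by
    rw [zpow_sub₀ hu, zpow_natCast, zpow_natCast, div_mul_cancel₀ _ (pow_ne_zero _ hu),
      pow_sub₀ _ hu hk, div_eq_mul_inv]
  rw [coeff_prod_smul_expXi_sub_smul_expXi]
  simp_rw [factor, mul_assoc, prod_mul_distrib, prod_const, card_univ, Fintype.card_fin, hprod]
  rw [chernLimitFn, Fintype.card_fin, ← hpow]
  ring

end limit

/-- Limit formula for Chern classes from exterior powers: with Chern roots `x_1,…,x_e`
(the variables of `MvPowerSeries (Fin e) ℝ`), for every monomial of total degree `≤ l`,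
`lim_{λ→0⁺} (1-e^{-λ})^{l-e} Π_{i=1}^e (e^{(λ-x_i)/2} - e^{-(λ-x_i)/2})`
equals the corresponding coefficient of `(-1)^l c_l(E) = (-1)^l e_l(x_1,…,x_e)`. -/
theorem chern_class_limit_formula (e l : ℕ) (d : Fin e →₀ ℕ)
    (hd : (d.sum fun _ n => n) ≤ l) :
    Tendsto
      (fun lam : ℝ =>
        (1 - Real.exp (-lam)) ^ ((l : ℤ) - (e : ℤ)) *
          MvPowerSeries.coeff (R := ℝ) d
            (∏ i : Fin e,
              (Real.exp (lam / 2) • expXi e (-(1 / 2)) i -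
                Real.exp (-(lam / 2)) • expXi e (1 / 2) i)))
      (nhdsWithin 0 (Set.Ioi 0))
      (nhds ((-1 : ℝ) ^ l * MvPolynomial.coeff d (MvPolynomial.esymm (Fin e) ℝ l))) := by
  have hdeg : d.degree ≤ l := hd
  rw [← chernLimitFn_zero hdeg]
  refine (((continuous_chernLimitFn l d).tendsto 0).mono_left nhdsWithin_le_nhds).congr' ?_
  filter_upwards [self_mem_nhdsWithin] with lam hlam
  exact (one_sub_exp_zpow_mul_coeff_prod_eq_chernLimitFn (ne_of_gt hlam)
    ((oddCount_le_degree d).trans hdeg)).symm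
end
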